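/- Let Σ be a finite alphabet with σ := |Σ| ≥ 2 and let k ≥ 2. A word w ∈ Σ* is nearly k-universal if and only if ι(w) = k−1, |alph(r(w))| = σ−1, and the word (ar_2(w^R)⋯ar_{k−1}(w^R)·r(w^R))^R, i.e., the reversal of w^R with its first arch removed, is nearly (k−1)-universal. -/

import Mathlib

/-- The set of scattered factors (subsequences) of `w` of length `k`. -/
def ScatFact {α : Type*} (k : ℕ) (w : List α) : Set (List α) :=
  {u | u.length = k ∧ u.Sublist w}

/-- `w` is nearly `k`-universal: exactly one word of length `k` is not
a scattered factor of `w`. -/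
def NearlyUniv (α : Type*) [Fintype α] (k : ℕ) (w : List α) : Prop :=
  (ScatFact k w).ncard = Fintype.card α ^ k - 1

/-- Auxiliary function computing the arch factorization: given enough fuel,
returns the list of arches together with the rest. Each arch is the shortest
prefix of the remaining suffix containing every letter of the alphabet. -/
noncomputable def archesAux {α : Type*} [Fintype α] [DecidableEq α] :
    ℕ → List α → List (List α) × List α
  | 0, w => ([], w)
  | (fuel+1), w =>
    if (Finset.univ : Finset α) ⊆ w.toFinset then
      let n := sInf {n | (Finset.univ : Finset α) ⊆ (w.take n).toFinset}
      let q := archesAux fuel (w.drop n)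
      ((w.take n) :: q.1, q.2)
    else ([], w)

/-- The list of arches of the arch factorization of `w`. -/
noncomputable def archList {α : Type*} [Fintype α] [DecidableEq α] (w : List α) :
    List (List α) :=
  (archesAux w.length w).1

/-- The rest `r(w)` of the arch factorization of `w`. -/
noncomputable def rest {α : Type*} [Fintype α] [DecidableEq α] (w : List α) : List α :=
  (archesAux w.length w).2

/-- The universality index `ι(w)`: the number of arches of `w`. -/
noncomputable def iota {α : Type*} [Fintype α] [DecidableEq α] (w : List α) : ℕ :=
  (archList w).length

/-- The `i`-th arch `ar_i(w)` (1-indexed). -/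
noncomputable def arch {α : Type*} [Fintype α] [DecidableEq α] (w : List α) (i : ℕ) :
    List α :=
  (archList w).getD (i-1) []

/-- The modus `m(w)`: the word of the last letters of the arches of `w`. -/
noncomputable def modus {α : Type*} [Fintype α] [DecidableEq α] (w : List α) : List α :=
  (archList w).filterMap List.getLast?

/-- `alph v` is the set of letters occurring in `v`. -/
def alph {α : Type*} [DecidableEq α] (v : List α) : Finset α := v.toFinset

/-- `w` is perfectly `m`-universal: both `w` and its reversal decompose into
exactly `m` arches with empty rest. -/
def PerfUniv {α : Type*} [Fintype α] [DecidableEq α] (m : ℕ) (w : List α) : Prop :=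
  iota w = m ∧ iota w.reverse = m ∧ rest w = [] ∧ rest w.reverse = []


section Aux
open List Finset

variable {α : Type*} [Fintype α] [DecidableEq α]

section
variable (hne : Nonempty α)
include hne

lemma sInf_facts {w : List α} (hfull : (Finset.univ : Finset α) ⊆ w.toFinset) :
    1 ≤ sInf {n | (Finset.univ : Finset α) ⊆ (w.take n).toFinset} ∧
    sInf {n | (Finset.univ : Finset α) ⊆ (w.take n).toFinset} ≤ w.length ∧
    (Finset.univ : Finset α) ⊆ (w.take (sInf {n | (Finset.univ : Finset α) ⊆ (w.take n).toFinset})).toFinset := by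
  set S := {n | (Finset.univ : Finset α) ⊆ (w.take n).toFinset} with hS
  have hSne : S.Nonempty := ⟨w.length, by simpa [hS] using hfull⟩
  have hmem : sInf S ∈ S := Nat.sInf_mem hSne
  have h1 : 1 ≤ sInf S := by
    rcases Nat.eq_zero_or_pos (sInf S) with h0 | h; swap
    · exact h
    · exfalso
      rw [h0] at hmem
      obtain ⟨a⟩ := hne
      have := hmem (Finset.mem_univ a)
      simp at this
  exact ⟨h1, Nat.sInf_le (by simpa [hS] using hfull), hmem⟩

lemma archesAux_stable : ∀ (w : List α) (fuel : ℕ), w.length ≤ fuel →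
    archesAux fuel w = archesAux w.length w := by
  intro w
  generalize hL : w.length = L
  induction L using Nat.strong_induction_on generalizing w with
  | _ L ih =>
  intro fuel h
  subst hL
  match fuel, h with
  | 0, h =>
    have : w.length = 0 := Nat.le_zero.mp h
    rw [this]
  | (f+1), h =>
    by_cases hfull : (Finset.univ : Finset α) ⊆ w.toFinset
    · obtain ⟨h1, h2, h3⟩ := sInf_facts hne hfull
      set n := sInf {n | (Finset.univ : Finset α) ⊆ (w.take n).toFinset} with hn
      have hw : w.length ≠ 0 := by
        intro h0
        rw [List.length_eq_zero_iff] at h0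
        subst h0
        obtain ⟨a⟩ := hne
        have := hfull (Finset.mem_univ a); simp at this
      obtain ⟨m, hm⟩ : ∃ m, w.length = m + 1 := ⟨w.length - 1, by omega⟩
      have hlen : (w.drop n).length < w.length := by
        rw [List.length_drop]; omega
      have e1 : archesAux f (w.drop n) = archesAux (w.drop n).length (w.drop n) := by
        apply ih _ hlen _ rfl
        rw [List.length_drop]; omega
      have e2 : archesAux m (w.drop n) = archesAux (w.drop n).length (w.drop n) := by
        apply ih _ hlen _ rfl
        rw [List.length_drop]; omega
      rw [hm]
      show (if _ then _ else _) = (if _ then _ else _)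
      rw [if_pos hfull, if_pos hfull]
      simp only [← hn, e1, e2]
    · cases fn : w.length with
      | zero => simp [archesAux, hfull]
      | succ m =>
        show (if _ then _ else _) = (if _ then _ else _)
        rw [if_neg hfull, if_neg hfull]

lemma arch_unfold_full {w : List α} (hfull : (Finset.univ : Finset α) ⊆ w.toFinset) :
    archList w = (w.take (sInf {n | (Finset.univ : Finset α) ⊆ (w.take n).toFinset}))
        :: archList (w.drop (sInf {n | (Finset.univ : Finset α) ⊆ (w.take n).toFinset})) ∧
    rest w = rest (w.drop (sInf {n | (Finset.univ : Finset α) ⊆ (w.take n).toFinset})) := by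
  obtain ⟨h1, h2, h3⟩ := sInf_facts hne hfull
  set n := sInf {n | (Finset.univ : Finset α) ⊆ (w.take n).toFinset} with hn
  have hw : w.length ≠ 0 := by
    intro h0
    rw [List.length_eq_zero_iff] at h0; subst h0
    obtain ⟨a⟩ := hne
    have := hfull (Finset.mem_univ a); simp at this
  obtain ⟨m, hm⟩ : ∃ m, w.length = m + 1 := ⟨w.length - 1, by omega⟩
  have e2 : archesAux m (w.drop n) = archesAux (w.drop n).length (w.drop n) := by
    apply archesAux_stable hne
    rw [List.length_drop]; omega
  unfold archList rest
  rw [hm]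
  show ((if _ then _ else _ : List (List α) × List α).1 = _) ∧ ((if _ then _ else _ : List (List α) × List α).2 = _)
  rw [if_pos hfull]
  simp only [← hn, e2]
  exact ⟨trivial, trivial⟩

end

lemma arch_unfold_nonfull {w : List α} (hfull : ¬ (Finset.univ : Finset α) ⊆ w.toFinset) :
    archList w = [] ∧ rest w = w := by
  unfold archList rest
  cases fn : w.length with
  | zero => simp [archesAux]
  | succ m =>
    show ((if _ then _ else _ : List (List α) × List α).1 = _) ∧ ((if _ then _ else _ : List (List α) × List α).2 = _)
    rw [if_neg hfull]
    exact ⟨rfl, rfl⟩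

def GoodArch {α : Type*} [Fintype α] [DecidableEq α] (a : List α) : Prop :=
  a ≠ [] ∧ (Finset.univ : Finset α) ⊆ a.toFinset ∧
    ¬ ((Finset.univ : Finset α) ⊆ a.dropLast.toFinset)

lemma take_dropLast (n : ℕ) (w : List α) (hn : n ≤ w.length) :
    (w.take n).dropLast = w.take (n-1) := by
  rcases lt_or_eq_of_le hn with h | h
  · exact List.dropLast_take h
  · rw [h, List.take_length, List.dropLast_eq_take]

lemma arch_facts (hne : Nonempty α) (w : List α) :
    (∀ a ∈ archList w, GoodArch a) ∧
    ¬ ((Finset.univ : Finset α) ⊆ (rest w).toFinset) ∧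
    (archList w).flatten ++ rest w = w := by
  generalize hL : w.length = L
  induction L using Nat.strong_induction_on generalizing w with
  | _ L ih =>
  subst hL
  by_cases hfull : (Finset.univ : Finset α) ⊆ w.toFinset
  · obtain ⟨h1, h2, h3⟩ := sInf_facts hne hfull
    obtain ⟨e1, e2⟩ := arch_unfold_full hne hfull
    set n := sInf {n | (Finset.univ : Finset α) ⊆ (w.take n).toFinset} with hn
    have hw0 : 1 ≤ w.length := le_trans h1 h2
    have hlen : (w.drop n).length < w.length := by
      rw [List.length_drop]; omega
    obtain ⟨ihg, ihr, ihf⟩ := ih _ hlen (w.drop n) rfl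
    have hgood : GoodArch (w.take n) := by
      refine ⟨?_, h3, ?_⟩
      · intro h0
        rw [h0] at h3
        obtain ⟨a⟩ := hne
        have := h3 (Finset.mem_univ a)
        simp at this
      · rw [take_dropLast n w h2]
        intro hcon
        exact Nat.notMem_of_lt_sInf (show n - 1 < n by omega) hcon
    refine ⟨?_, ?_, ?_⟩
    · intro a ha
      rw [e1] at ha
      rcases List.mem_cons.mp ha with h | h
      · rwa [h]
      · exact ihg a h
    · rwa [e2]
    · rw [e1, e2]
      simp only [List.flatten_cons]
      rw [List.append_assoc, ihf, List.take_append_drop]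
  · obtain ⟨e1, e2⟩ := arch_unfold_nonfull hfull
    rw [e1, e2]
    exact ⟨by simp, hfull, by simp⟩

omit [Fintype α] [DecidableEq α] in
lemma cons_sublist_of_not_mem {c : α} {m A B : List α}
    (h : c :: m <+ A ++ B) (hc : c ∉ A) : c :: m <+ B := by
  obtain ⟨l₁, l₂, he, h1, h2⟩ := List.sublist_append_iff.mp h
  cases l₁ with
  | nil =>
    rw [List.nil_append] at he
    rw [← he] at h2
    exact h2
  | cons x l₁' =>
    exfalso
    have hx : x = c := by
      have := congrArg (List.head?) he
      simp at this
      exact this.symm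
    exact hc (h1.subset (hx ▸ (List.mem_cons_self (a := x) (l := l₁'))))

omit [Fintype α] [DecidableEq α] in
lemma sublist_of_append_singleton {c : α} {u s t : List α}
    (h : u ++ [c] <+ s ++ (c :: t)) (hc : c ∉ t) : u <+ s := by
  have hr : c :: u.reverse <+ t.reverse ++ ([c] ++ s.reverse) := by
    have := h.reverse
    simpa [List.reverse_append] using this
  have h1 : c :: u.reverse <+ [c] ++ s.reverse :=
    cons_sublist_of_not_mem hr (by simpa using hc)
  have h1' : c :: u.reverse <+ c :: s.reverse := by simpa using h1
  have h2 : u.reverse <+ s.reverse := List.cons_sublist_cons.mp h1'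
  exact List.reverse_sublist.mp h2

lemma universality {as : List (List α)} (hu : ∀ a ∈ as, (Finset.univ : Finset α) ⊆ a.toFinset)
    {u : List α} (hlen : u.length ≤ as.length) : u <+ as.flatten := by
  induction as generalizing u with
  | nil => simp_all [List.length_eq_zero_iff.mp (Nat.le_zero.mp hlen)]
  | cons a as' ih =>
    cases u with
    | nil => exact List.nil_sublist _
    | cons x u' =>
      have hx : x ∈ a := by
        have := hu a ((List.mem_cons_self (a := a) (l := as'))) (Finset.mem_univ x)
        simpa using this
      have h1 : [x] <+ a := List.singleton_sublist.mpr hx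
      have h2 : u' <+ as'.flatten := ih (fun b hb => hu b (List.mem_cons_of_mem _ hb))
        (by simpa using Nat.succ_le_succ_iff.mp (by simpa using hlen))
      simpa using h1.append h2

lemma modus_append_not_sublist {as : List (List α)} {r : List α}
    (hg : ∀ a ∈ as, GoodArch a) {x : α}
    (h : as.filterMap List.getLast? ++ [x] <+ as.flatten ++ r) : x ∈ r := by
  induction as generalizing r with
  | nil => simpa using h
  | cons a as' ih =>
    obtain ⟨hane, hafull, hamin⟩ := hg a ((List.mem_cons_self (a := a) (l := as')))
    have hlast : a.getLast? = some (a.getLast hane) := List.getLast?_eq_getLast hane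
    have hcnotin : a.getLast hane ∉ a.dropLast := by
      intro hmem
      apply hamin
      intro y _
      rw [List.mem_toFinset]
      have hy : y ∈ a := List.mem_toFinset.mp (hafull (Finset.mem_univ y))
      rcases (by rw [← List.dropLast_append_getLast hane] at hy; simpa using hy :
          y ∈ a.dropLast ∨ y = a.getLast hane) with h' | h'
      · exact h'
      · exact h' ▸ hmem
    have heq : a.dropLast ++ ([a.getLast hane] ++ (as'.flatten ++ r))
        = a ++ (as'.flatten ++ r) := by
      rw [← List.append_assoc, List.dropLast_append_getLast hane]
    have hstep : a.getLast hane :: (as'.filterMap List.getLast? ++ [x])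
        <+ a.dropLast ++ ([a.getLast hane] ++ (as'.flatten ++ r)) := by
      rw [heq]
      simpa [hlast, List.append_assoc] using h
    have h2 := cons_sublist_of_not_mem hstep hcnotin
    have h2' : a.getLast hane :: (as'.filterMap List.getLast? ++ [x])
        <+ a.getLast hane :: (as'.flatten ++ r) := by simpa using h2
    have h3 : as'.filterMap List.getLast? ++ [x] <+ as'.flatten ++ r :=
      List.cons_sublist_cons.mp h2'
    exact ih (fun b hb => hg b (List.mem_cons_of_mem _ hb)) h3

lemma lenSet_finite (k : ℕ) : {u : List α | u.length = k}.Finite :=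
  List.finite_length_eq α k

lemma lenSet_ncard (k : ℕ) :
    {u : List α | u.length = k}.ncard = Fintype.card α ^ k := by
  have hrange : {u : List α | u.length = k} = Set.range (List.ofFn : (Fin k → α) → List α) := by
    ext u
    simp only [Set.mem_setOf_eq, Set.mem_range]
    constructor
    · intro h
      subst h
      exact ⟨u.get, List.ofFn_get u⟩
    · rintro ⟨f, rfl⟩; simp
  rw [hrange, ← Set.image_univ, Set.ncard_image_of_injective _ List.ofFn_injective,
    Set.ncard_univ]
  simp [Nat.card_eq_fintype_card]

lemma scatFact_subset (k : ℕ) (w : List α) :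
    ScatFact k w ⊆ {u : List α | u.length = k} := fun u hu => hu.1

lemma scatFact_finite (k : ℕ) (w : List α) : (ScatFact k w).Finite :=
  (lenSet_finite k).subset (scatFact_subset k w)

lemma scatFact_ncard_le (k : ℕ) (w : List α) :
    (ScatFact k w).ncard ≤ Fintype.card α ^ k := by
  rw [← lenSet_ncard (α := α) k]
  exact Set.ncard_le_ncard (scatFact_subset k w) (lenSet_finite k)

lemma count_key (k' : ℕ) (s t : List α) (c : α) (hct : c ∉ t)
    (huniv : ∀ u : List α, u.length = k' → ∀ x, x ≠ c → u ++ [x] <+ s ++ (c :: t)) :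
    (ScatFact (k'+1) (s ++ (c :: t))).ncard
      = (ScatFact k' s).ncard + (Fintype.card α ^ (k'+1) - Fintype.card α ^ k') := by
  set e : List α → List α := fun u => u ++ [c] with he
  have einj : Function.Injective e := List.append_left_injective [c]
  have heq : ScatFact (k'+1) (s ++ (c :: t)) =
      (e '' ScatFact k' s) ∪ ({u : List α | u.length = k'+1} \ (e '' {u : List α | u.length = k'})) := by
    ext u
    constructor
    · rintro ⟨hlen, hsub⟩
      rcases List.eq_nil_or_concat u with rfl | ⟨u', x, rfl⟩
      · simp at hlen
      rw [List.concat_eq_append] at *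
      have hulen : u'.length = k' := by
        simp at hlen; omega
      by_cases hx : x = c
      · subst hx
        left
        exact ⟨u', ⟨hulen, sublist_of_append_singleton hsub hct⟩, rfl⟩
      · right
        refine ⟨by simpa using hlen, ?_⟩
        rintro ⟨v, hv, hev⟩
        simp only [he] at hev
        have hvlen : v.length = u'.length := by
          have : v.length = k' := hv
          omega
        have : [c] = [x] := List.append_inj_right hev hvlen
        simp at this
        exact hx this.symm
    · rintro (⟨v, ⟨hvl, hvs⟩, rfl⟩ | ⟨hlen, hnot⟩)
      · refine ⟨by simp [he, hvl], ?_⟩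
        show v ++ [c] <+ s ++ (c :: t)
        exact hvs.append (by simp)
      · rcases List.eq_nil_or_concat u with rfl | ⟨u', x, rfl⟩
        · simp at hlen
        rw [List.concat_eq_append] at *
        have hulen : u'.length = k' := by
          simp at hlen; omega
        by_cases hx : x = c
        · exact absurd ⟨u', hulen, by rw [he, hx]⟩ hnot
        · exact ⟨hlen, huniv u' hulen x hx⟩
  have hsubL : e '' ScatFact k' s ⊆ e '' {u : List α | u.length = k'} :=
    Set.image_mono (scatFact_subset k' s)
  have hfin1 : (e '' ScatFact k' s).Finite := (scatFact_finite k' s).image e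
  have hfinL : (e '' {u : List α | u.length = k'}).Finite := (lenSet_finite k').image e
  have hfin2 : ({u : List α | u.length = k'+1} \ (e '' {u : List α | u.length = k'})).Finite :=
    (lenSet_finite (k'+1)).diff
  have hdisj : Disjoint (e '' ScatFact k' s)
      ({u : List α | u.length = k'+1} \ (e '' {u : List α | u.length = k'})) := by
    rw [Set.disjoint_left]
    intro u hu hdiff
    exact hdiff.2 (hsubL hu)
  have himgL : e '' {u : List α | u.length = k'} ⊆ {u : List α | u.length = k'+1} := by
    rintro _ ⟨v, hv, rfl⟩
    have hv' : v.length = k' := hv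
    simp [he, hv']
  rw [heq, Set.ncard_union_eq hdisj hfin1 hfin2,
    Set.ncard_image_of_injective _ einj,
    Set.ncard_diff himgL hfinL,
    Set.ncard_image_of_injective _ einj,
    lenSet_ncard, lenSet_ncard]

lemma nearly_step (hσ : 2 ≤ Fintype.card α) (k' : ℕ) (hk' : 1 ≤ k') (s t : List α) (c : α)
    (hct : c ∉ t)
    (huniv : ∀ u : List α, u.length = k' → ∀ x, x ≠ c → u ++ [x] <+ s ++ (c :: t)) :
    NearlyUniv α (k'+1) (s ++ (c :: t)) ↔ NearlyUniv α k' s := by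
  unfold NearlyUniv
  rw [count_key k' s t c hct huniv]
  have hb1 : (ScatFact k' s).ncard ≤ Fintype.card α ^ k' := scatFact_ncard_le k' s
  have hb2 : Fintype.card α ^ k' ≤ Fintype.card α ^ (k'+1) :=
    Nat.pow_le_pow_right (by omega) (by omega)
  have hb3 : 2 ≤ Fintype.card α ^ k' :=
    le_trans hσ (Nat.le_self_pow (by omega) _)
  omega

lemma iota_def (w : List α) : iota w = (archList w).length := rfl

lemma filterMap_getLast_length {as : List (List α)} (h : ∀ a ∈ as, a ≠ []) :
    (as.filterMap List.getLast?).length = as.length := by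
  induction as with
  | nil => simp
  | cons a as' ih =>
    have hane : a ≠ [] := h a ((List.mem_cons_self (a := a) (l := as')))
    have := List.getLast?_eq_getLast hane
    simp [List.filterMap_cons, this, ih (fun b hb => h b (List.mem_cons_of_mem _ hb))]

lemma sf_all {k : ℕ} {w : List α} (hne : Nonempty α) (h : k ≤ iota w) :
    ScatFact k w = {u : List α | u.length = k} := by
  obtain ⟨hg, hr, hf⟩ := arch_facts hne w
  apply Set.eq_of_subset_of_subset (scatFact_subset k w)
  intro u hu
  refine ⟨hu, ?_⟩
  have h1 : u <+ (archList w).flatten :=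
    universality (fun a ha => (hg a ha).2.1) (le_trans (le_of_eq hu) h)
  calc u <+ (archList w).flatten := h1
    _ <+ (archList w).flatten ++ rest w := List.sublist_append_left _ _
    _ = w := hf

lemma not_nearly_of_two (hσ : 2 ≤ Fintype.card α) {k : ℕ} {w u1 u2 : List α}
    (h1 : u1.length = k) (h2 : u2.length = k) (hne12 : u1 ≠ u2)
    (m1 : ¬ u1 <+ w) (m2 : ¬ u2 <+ w) : ¬ NearlyUniv α k w := by
  intro hN
  have hk0 : k ≠ 0 := by
    rintro rfl
    rw [List.length_eq_zero_iff] at h1 h2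
    exact hne12 (h1.trans h2.symm)
  have hsub : ScatFact k w ⊆ {u : List α | u.length = k} \ {u1, u2} := by
    intro u hu
    refine ⟨hu.1, ?_⟩
    rintro (rfl | rfl)
    · exact m1 hu.2
    · exact m2 hu.2
  have hpair : ({u1, u2} : Set (List α)) ⊆ {u : List α | u.length = k} := by
    rintro u (rfl | rfl) <;> assumption
  have hcard : ({u : List α | u.length = k} \ {u1, u2}).ncard
      = Fintype.card α ^ k - 2 := by
    rw [Set.ncard_diff hpair ((Set.finite_singleton u2).insert u1),
      Set.ncard_pair hne12, lenSet_ncard]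
  have hle : (ScatFact k w).ncard ≤ Fintype.card α ^ k - 2 := by
    rw [← hcard]
    exact Set.ncard_le_ncard hsub ((lenSet_finite k).diff)
  have hbig : 2 ≤ Fintype.card α ^ k := le_trans hσ (Nat.le_self_pow hk0 _)
  rw [NearlyUniv] at hN
  omega

lemma nearly_iff_via_rev (hσ : 2 ≤ Fintype.card α) {k : ℕ} (hk : 2 ≤ k) (w : List α)
    (hι : iota w = k - 1) (hrest : (alph (rest w)).card = Fintype.card α - 1) :
    NearlyUniv α k w ↔ NearlyUniv α (k - 1)
      (((archList w.reverse).drop 1).flatten ++ rest w.reverse).reverse := by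
  have hne : Nonempty α := Fintype.card_pos_iff.mp (by omega)
  -- w contains every letter
  have hfull : (Finset.univ : Finset α) ⊆ w.toFinset := by
    by_contra hcon
    obtain ⟨e1, _⟩ := arch_unfold_nonfull hcon
    rw [iota_def, e1] at hι
    simp at hι
    omega
  have hfullrev : (Finset.univ : Finset α) ⊆ w.reverse.toFinset := by
    rwa [List.toFinset_reverse]
  obtain ⟨hgrev, hrrev, hfrev⟩ := arch_facts hne w.reverse
  obtain ⟨hg, hr, hf⟩ := arch_facts hne w
  obtain ⟨e1, _⟩ := arch_unfold_full hne hfullrev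
  set A := w.reverse.take (sInf {n | (Finset.univ : Finset α) ⊆ ((w.reverse.take n)).toFinset}) with hA
  set tl := archList (w.reverse.drop (sInf {n | (Finset.univ : Finset α) ⊆ ((w.reverse.take n)).toFinset})) with htl
  have hgA : GoodArch A := hgrev A (by rw [e1]; exact List.mem_cons_self)
  obtain ⟨hane, hafull, hamin⟩ := hgA
  set c := A.getLast hane with hc
  set t := A.dropLast.reverse with ht
  set s := (tl.flatten ++ rest w.reverse).reverse with hs
  -- c not in dropLast A
  have hcnd : c ∉ A.dropLast := by
    intro hmem
    apply hamin
    intro y _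
    rw [List.mem_toFinset]
    have hy : y ∈ A := List.mem_toFinset.mp (hafull (Finset.mem_univ y))
    rcases (by rw [← List.dropLast_append_getLast hane] at hy; simpa using hy :
        y ∈ A.dropLast ∨ y = c) with h' | h'
    · exact h'
    · exact h' ▸ hmem
  have hct : c ∉ t := by simpa [ht] using hcnd
  have htalph : ∀ y, y ≠ c → y ∈ t := by
    intro y hy
    have hyA : y ∈ A := List.mem_toFinset.mp (hafull (Finset.mem_univ y))
    rw [← List.dropLast_append_getLast hane] at hyA
    rcases List.mem_append.mp hyA with h' | h'
    · simpa [ht] using h'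
    · simp at h'
      exact absurd h' hy
  -- decomposition w = s ++ (c :: t)
  have hArev : A.reverse = c :: t := by
    conv_lhs => rw [← List.dropLast_append_getLast hane]
    simp [ht, hc]
  have hwdec : w = s ++ (c :: t) := by
    have h1 : w.reverse = A ++ (tl.flatten ++ rest w.reverse) := by
      conv_lhs => rw [← hfrev, e1]
      simp [List.append_assoc]
    have := congrArg List.reverse h1
    rw [List.reverse_reverse, List.reverse_append] at this
    rw [this, hs, hArev]
  -- rest w is a suffix of t, so c ∉ rest w
  have hcrest : c ∉ rest w := by
    have hsfx1 : rest w <:+ w := ⟨(archList w).flatten, hf⟩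
    have hsfx2 : (c :: t) <:+ w := ⟨s, hwdec.symm⟩
    rcases List.suffix_or_suffix_of_suffix hsfx1 hsfx2 with h' | h'
    · rcases List.suffix_cons_iff.mp h' with h'' | h''
      · exfalso
        apply hr
        intro y _
        rw [List.mem_toFinset, h'']
        by_cases hyc : y = c
        · simp [hyc]
        · exact List.mem_cons_of_mem _ (htalph y hyc)
      · intro hmem
        exact hct (h''.sublist.subset hmem)
    · exfalso
      apply hr
      intro y _
      rw [List.mem_toFinset]
      apply h'.sublist.subset
      by_cases hyc : y = c
      · simp [hyc]
      · exact List.mem_cons_of_mem _ (htalph y hyc)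
  -- alph (rest w) = univ.erase c
  have halpheq : alph (rest w) = Finset.univ.erase c := by
    apply Finset.eq_of_subset_of_card_le
    · intro y hy
      rw [Finset.mem_erase]
      refine ⟨?_, Finset.mem_univ y⟩
      rintro rfl
      exact hcrest (List.mem_toFinset.mp hy)
    · rw [Finset.card_erase_of_mem (Finset.mem_univ c), Finset.card_univ, hrest]
  have hrestmem : ∀ x, x ≠ c → x ∈ rest w := by
    intro x hx
    have : x ∈ alph (rest w) := by
      rw [halpheq, Finset.mem_erase]
      exact ⟨hx, Finset.mem_univ x⟩
    exact List.mem_toFinset.mp this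
  -- the universality hypothesis
  have huniv : ∀ u : List α, u.length = k - 1 → ∀ x, x ≠ c → u ++ [x] <+ s ++ (c :: t) := by
    intro u hu x hx
    rw [← hwdec, ← hf]
    have h1 : u <+ (archList w).flatten :=
      universality (fun a ha => (hg a ha).2.1)
        (by rw [hu, ← hι, iota_def])
    have h2 : [x] <+ rest w := List.singleton_sublist.mpr (hrestmem x hx)
    exact h1.append h2
  have hsdef : (((archList w.reverse).drop 1).flatten ++ rest w.reverse).reverse = s := by
    rw [e1]
    simp [hs]
  rw [hsdef]
  obtain ⟨k', rfl⟩ : ∃ k', k = k' + 1 := ⟨k - 1, by omega⟩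
  have : k' + 1 - 1 = k' := by omega
  rw [this] at *
  rw [hwdec]
  exact nearly_step hσ k' (by omega) s t c hct huniv

end Aux

/-- Recursive characterisation: `w` is nearly `k`-universal iff `ι(w) = k-1`,
`|alph(r(w))| = σ-1`, and the reversal of `w^R` with its first arch removed is
nearly `(k-1)`-universal. -/
theorem stmt_15 {α : Type*} [Fintype α] [DecidableEq α]
    (hσ : 2 ≤ Fintype.card α) {k : ℕ} (hk : 2 ≤ k) (w : List α) :
    NearlyUniv α k w ↔
      iota w = k - 1 ∧
      (alph (rest w)).card = Fintype.card α - 1 ∧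
      NearlyUniv α (k - 1)
        (((archList w.reverse).drop 1).flatten ++ rest w.reverse).reverse := by
  have hne : Nonempty α := Fintype.card_pos_iff.mp (by omega)
  obtain ⟨hg, hr, hf⟩ := arch_facts hne w
  have hmodne : ∀ a ∈ archList w, a ≠ [] := fun a ha => (hg a ha).1
  have hmodlen : (modus w).length = iota w := by
    rw [modus, iota_def, filterMap_getLast_length hmodne]
  have hmissing : ∀ x : α, x ∉ rest w → ∀ v : List α,
      ¬ List.Sublist ((modus w ++ [x]) ++ v) w := by
    intro x hx v hsub
    apply hx
    apply modus_append_not_sublist hg (r := rest w)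
    rw [hf]
    exact (List.sublist_append_left _ _).trans hsub
  constructor
  · intro hN
    have hσk : 2 ≤ Fintype.card α ^ k := le_trans hσ (Nat.le_self_pow (by omega) _)
    have hι : iota w = k - 1 := by
      by_contra hcon
      rcases lt_or_gt_of_ne hcon with hlt | hgt
      · -- iota w ≤ k - 2 : at least two missing words
        obtain ⟨x, _, hx⟩ := Finset.not_subset.mp hr
        have hxrest : x ∉ rest w := fun h => hx (List.mem_toFinset.mpr h)
        obtain ⟨a, b, hab⟩ := Fintype.exists_pair_of_one_lt_card (α := α) (by omega)
        set j := k - iota w - 1 with hj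
        have hj1 : 1 ≤ j := by omega
        have hlen1 : ((modus w ++ [x]) ++ List.replicate j a).length = k := by
          simp [hmodlen]; omega
        have hlen2 : ((modus w ++ [x]) ++ List.replicate j b).length = k := by
          simp [hmodlen]; omega
        have hne12 : (modus w ++ [x]) ++ List.replicate j a
            ≠ (modus w ++ [x]) ++ List.replicate j b := by
          intro h
          have h2 := List.append_cancel_left h
          apply hab
          have ha : a ∈ List.replicate j a := List.mem_replicate.mpr ⟨by omega, rfl⟩
          rw [h2] at ha
          exact List.eq_of_mem_replicate ha
        exact not_nearly_of_two hσ hlen1 hlen2 hne12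
          (hmissing x hxrest _) (hmissing x hxrest _) hN
      · -- iota w ≥ k : all words present
        have hall : ScatFact k w = {u : List α | u.length = k} := sf_all hne (by omega)
        have hval : (ScatFact k w).ncard = Fintype.card α ^ k := by
          rw [hall, lenSet_ncard]
        have hN' := hN
        unfold NearlyUniv at hN'
        omega
    have hrestcard : (alph (rest w)).card = Fintype.card α - 1 := by
      by_contra hcon
      have hne_univ : alph (rest w) ≠ Finset.univ := by
        intro h
        exact hr (by rw [alph] at h; rw [h])
      have hlt : (alph (rest w)).card < Fintype.card α := by
        rw [← Finset.card_univ]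
        exact Finset.card_lt_card (Finset.ssubset_univ_iff.mpr hne_univ)
      have hcard2 : 2 ≤ (Finset.univ \ alph (rest w)).card := by
        rw [Finset.card_sdiff_of_subset (Finset.subset_univ _), Finset.card_univ]
        omega
      obtain ⟨x, hxm, y, hym, hxy⟩ := Finset.one_lt_card.mp hcard2
      have hxrest : x ∉ rest w := by
        intro h
        exact (Finset.mem_sdiff.mp hxm).2 (List.mem_toFinset.mpr h)
      have hyrest : y ∉ rest w := by
        intro h
        exact (Finset.mem_sdiff.mp hym).2 (List.mem_toFinset.mpr h)
      have hlen1 : (modus w ++ [x]).length = k := by simp [hmodlen, hι]; omega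
      have hlen2 : (modus w ++ [y]).length = k := by simp [hmodlen, hι]; omega
      have hne12 : modus w ++ [x] ≠ modus w ++ [y] := by
        intro h
        have := List.append_cancel_left h
        simp at this
        exact hxy this
      have m1 : ¬ List.Sublist (modus w ++ [x]) w := by
        have := hmissing x hxrest []
        simpa using this
      have m2 : ¬ List.Sublist (modus w ++ [y]) w := by
        have := hmissing y hyrest []
        simpa using this
      exact not_nearly_of_two hσ hlen1 hlen2 hne12 m1 m2 hN
    exact ⟨hι, hrestcard, (nearly_iff_via_rev hσ hk w hι hrestcard).mp hN⟩
  · rintro ⟨hι, hrestcard, h3⟩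
    exact (nearly_iff_via_rev hσ hk w hι hrestcard).mpr h3
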